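/- arXiv:2511.21935 — 3 statements merged into one kernel-verified Lean document; each statement's English description precedes it below -/
import Mathlib

section
/- Let K ≥ 2 and c = m/K with 1 ≤ m ≤ K−1, and let P_{c,K} be the discretized equal-revenue distribution. Then the expectation of P_{c,K} equals c·(H_K − H_m + 1), where H_n = Σ_{j=1}^n 1/j is the n-th harmonic number. -/
/-- Discretized equal-revenue distribution with parameter `c = m/K`,
given as a mass function on grid indices `i` (price `i/K`). -/
noncomputable def derd (K m : ℕ) : ℕ → ℝ := fun i =>
  if i = K then (m : ℝ) / K
  else if m ≤ i ∧ i ≤ K - 1 then ((m : ℝ) / K) * ((K : ℝ) / i - (K : ℝ) / (i + 1))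
  else 0

/-- The `n`-th harmonic number `H_n = ∑_{j=1}^n 1/j`. -/
noncomputable def harm (n : ℕ) : ℝ := ∑ j ∈ Finset.Icc 1 n, (1 : ℝ) / j

/-- The expectation of the discretized equal-revenue distribution equals
`c · (H_K − H_m + 1)`. -/
theorem derd_expectation (K m : ℕ) (hK : 2 ≤ K) (hm1 : 1 ≤ m) (hmK : m ≤ K - 1) :
    ∑ i ∈ Finset.range (K + 1), ((i : ℝ) / K) * derd K m i
      = ((m : ℝ) / K) * (harm K - harm m + 1) := by
  have hK1 : 1 ≤ K := le_trans one_le_two hK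
  have hK0 : (K : ℝ) ≠ 0 := Nat.cast_ne_zero.mpr (by omega)
  rw [Finset.sum_range_succ]
  have hlast : ((K : ℝ) / K) * derd K m K = (m : ℝ) / K := by
    simp [derd, div_self hK0]
  rw [hlast]
  -- restrict the remaining sum to Icc m (K-1)
  have hsub : Finset.Icc m (K - 1) ⊆ Finset.range K := by
    intro x hx
    simp only [Finset.mem_Icc] at hx
    simp only [Finset.mem_range]
    omega
  have h1 : ∑ i ∈ Finset.range K, ((i : ℝ) / K) * derd K m i
      = ∑ i ∈ Finset.Icc m (K - 1), ((m : ℝ) / K) * (1 / ((i : ℝ) + 1)) := by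
    rw [← Finset.sum_subset hsub]
    · apply Finset.sum_congr rfl
      intro i hi
      simp only [Finset.mem_Icc] at hi
      have hiK : i ≠ K := by omega
      have hi0 : (i : ℝ) ≠ 0 := Nat.cast_ne_zero.mpr (by omega)
      have hi1 : (i : ℝ) + 1 ≠ 0 := by positivity
      simp only [derd, if_neg hiK, if_pos (And.intro hi.1 hi.2)]
      field_simp
      ring
    · intro x hx hnx
      simp only [Finset.mem_range] at hx
      simp only [Finset.mem_Icc] at hnx
      have hxK : x ≠ K := by omega
      have hcond : ¬ (m ≤ x ∧ x ≤ K - 1) := by omega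
      simp [derd, if_neg hxK, if_neg hcond]
  rw [h1, ← Finset.mul_sum]
  -- reindex the sum
  have hKK : K - 1 + 1 = K := by omega
  have h2 : ∑ i ∈ Finset.Icc m (K - 1), (1 / ((i : ℝ) + 1))
      = ∑ j ∈ Finset.Icc (m + 1) K, (1 : ℝ) / j := by
    have hmap := Finset.sum_map (Finset.Icc m (K - 1)) (addRightEmbedding 1)
      (fun j => (1 : ℝ) / j)
    rw [Finset.map_add_right_Icc, hKK] at hmap
    rw [hmap]
    apply Finset.sum_congr rfl
    intro i _
    simp [addRightEmbedding_apply]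
  have h3 : harm K - harm m = ∑ j ∈ Finset.Icc (m + 1) K, (1 : ℝ) / j := by
    have : harm m + ∑ j ∈ Finset.Icc (m + 1) K, (1 : ℝ) / j = harm K := by
      unfold harm
      rw [show Finset.Icc 1 m = Finset.Ioc 0 m from Finset.Icc_add_one_left_eq_Ioc 0 m,
          show Finset.Icc (m + 1) K = Finset.Ioc m K from Finset.Icc_add_one_left_eq_Ioc m K,
          show Finset.Icc 1 K = Finset.Ioc 0 K from Finset.Icc_add_one_left_eq_Ioc 0 K]
      exact Finset.sum_Ioc_consecutive _ (Nat.zero_le m) (by omega)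
    linarith
  rw [h2, ← h3]
  ring
end

section
/- Let K ≥ 2 and c = m/K with 1 ≤ m ≤ K−1. The expectation of the discretized equal-revenue distribution P_{c,K} satisfies c·(ln((K+1)/(m+1)) + 1) ≤ E[P_{c,K}] ≤ c·(ln(K/m) + 1). -/
/-!
Only the prices `i/K` with `m ≤ i < K` and the top price `1` carry mass, and on the former the
price times the mass is `(m/K) · (i/K) · (K/i - K/(i+1)) = (m/K) / (i+1)`. Hence
`E[P_{c,K}] = c · (H_K - H_m + 1)`, and the harmonic difference is squeezed between the two
logarithms by comparing each term `1/(i+1)` with `log((i+2)/(i+1))` and `log((i+1)/i)`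
(both from `log x ≤ x - 1`) and telescoping.
-/

open Finset Real

lemma inv_add_one_le_log_add_one_sub_log {x : ℝ} (hx : 0 < x) :
    (x + 1)⁻¹ ≤ log (x + 1) - log x := by
  have h := one_sub_inv_le_log_of_pos (show 0 < (x + 1) / x by positivity)
  have h_lhs : 1 - ((x + 1) / x)⁻¹ = (x + 1)⁻¹ := by field_simp; ring
  rwa [h_lhs, log_div (by positivity) hx.ne'] at h

lemma log_add_one_sub_log_le_inv {x : ℝ} (hx : 0 < x) :
    log (x + 1) - log x ≤ x⁻¹ := by
  have h := log_le_sub_one_of_pos (show 0 < (x + 1) / x by positivity)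
  have h_rhs : (x + 1) / x - 1 = x⁻¹ := by field_simp; ring
  rwa [h_rhs, log_div (by positivity) hx.ne'] at h

lemma log_div_le_sum_Ico_inv {m n : ℕ} (hmn : m ≤ n) :
    log (((n : ℝ) + 1) / ((m : ℝ) + 1)) ≤ ∑ i ∈ Ico m n, ((i : ℝ) + 1)⁻¹ := by
  calc log (((n : ℝ) + 1) / ((m : ℝ) + 1))
      = ∑ i ∈ Ico m n, (log (((i + 1 : ℕ) : ℝ) + 1) - log ((i : ℝ) + 1)) := by
        rw [sum_Ico_sub (fun i : ℕ ↦ log ((i : ℝ) + 1)) hmn,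
          log_div (by positivity) (by positivity)]
    _ ≤ ∑ i ∈ Ico m n, ((i : ℝ) + 1)⁻¹ := by
        gcongr with i
        push_cast
        exact log_add_one_sub_log_le_inv (by positivity)

lemma sum_Ico_inv_le_log_div {m n : ℕ} (hm : 0 < m) (hmn : m ≤ n) :
    ∑ i ∈ Ico m n, ((i : ℝ) + 1)⁻¹ ≤ log ((n : ℝ) / m) := by
  calc ∑ i ∈ Ico m n, ((i : ℝ) + 1)⁻¹
      ≤ ∑ i ∈ Ico m n, (log ((i + 1 : ℕ) : ℝ) - log (i : ℝ)) := by
        gcongr with i hi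
        push_cast
        exact inv_add_one_le_log_add_one_sub_log (Nat.cast_pos.2 (hm.trans_le (mem_Ico.1 hi).1))
    _ = log ((n : ℝ) / m) := by
        rw [sum_Ico_sub (fun i : ℕ ↦ log (i : ℝ)) hmn,
          log_div (Nat.cast_ne_zero.2 (hm.trans_le hmn).ne') (Nat.cast_ne_zero.2 hm.ne')]

section Expectation

variable {K m : ℕ}

lemma derd_eq_zero_of_lt (hmK : m < K) {i : ℕ} (hi : i < m) : derd K m i = 0 := by
  simp only [derd, if_neg (show i ≠ K by omega),
    if_neg (show ¬(m ≤ i ∧ i ≤ K - 1) by omega)]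

lemma price_mul_derd_of_mem_Ico (hm : 0 < m) {i : ℕ} (hi : i ∈ Ico m K) :
    (i : ℝ) / K * derd K m i = (m : ℝ) / K * ((i : ℝ) + 1)⁻¹ := by
  obtain ⟨hmi, hiK⟩ := mem_Ico.1 hi
  have hi0 : (i : ℝ) ≠ 0 := Nat.cast_ne_zero.2 (hm.trans_le hmi).ne'
  have hK0 : (K : ℝ) ≠ 0 := Nat.cast_ne_zero.2 (hmi.trans_lt hiK).ne_bot
  simp only [derd, if_neg hiK.ne, if_pos (show m ≤ i ∧ i ≤ K - 1 from ⟨hmi, by omega⟩)]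
  field_simp
  ring

lemma sum_price_mul_derd (hm : 0 < m) (hmK : m < K) :
    ∑ i ∈ range (K + 1), (i : ℝ) / K * derd K m i
      = (m : ℝ) / K * (∑ i ∈ Ico m K, ((i : ℝ) + 1)⁻¹ + 1) := by
  have hK0 : (K : ℝ) ≠ 0 := Nat.cast_ne_zero.2 (hm.trans hmK).ne'
  have h_below : ∑ i ∈ range K, (i : ℝ) / K * derd K m i
      = ∑ i ∈ Ico m K, (i : ℝ) / K * derd K m i := by
    refine (sum_subset (fun i hi ↦ mem_range.2 (mem_Ico.1 hi).2) fun i hiK hi ↦ ?_).symm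
    rw [derd_eq_zero_of_lt hmK (not_le.1 fun hmi ↦ hi (mem_Ico.2 ⟨hmi, mem_range.1 hiK⟩)),
      mul_zero]
  rw [sum_range_succ, h_below, sum_congr rfl fun i hi ↦ price_mul_derd_of_mem_Ico hm hi,
    ← mul_sum, derd, if_pos rfl, div_self hK0, one_mul, mul_add, mul_one]

end Expectation

theorem derd_expectation_bounds_general (K m : ℕ) (hm1 : 1 ≤ m) (hmK : m ≤ K - 1) :
    ((m : ℝ) / K) * (Real.log (((K : ℝ) + 1) / ((m : ℝ) + 1)) + 1)
      ≤ ∑ i ∈ Finset.range (K + 1), ((i : ℝ) / K) * derd K m i ∧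
    ∑ i ∈ Finset.range (K + 1), ((i : ℝ) / K) * derd K m i
      ≤ ((m : ℝ) / K) * (Real.log ((K : ℝ) / m) + 1) := by
  have hmK' : m < K := by omega
  rw [sum_price_mul_derd hm1 hmK']
  exact ⟨by gcongr; exact log_div_le_sum_Ico_inv hmK'.le,
    by gcongr; exact sum_Ico_inv_le_log_div hm1 hmK'.le⟩

/-- The expectation of the discretized equal-revenue distribution satisfies
`c·(ln((K+1)/(m+1)) + 1) ≤ E[P_{c,K}] ≤ c·(ln(K/m) + 1)`. -/
theorem derd_expectation_bounds (K m : ℕ) (hK : 2 ≤ K) (hm1 : 1 ≤ m) (hmK : m ≤ K - 1) :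
    ((m : ℝ) / K) * (Real.log (((K : ℝ) + 1) / ((m : ℝ) + 1)) + 1)
      ≤ ∑ i ∈ Finset.range (K + 1), ((i : ℝ) / K) * derd K m i ∧
    ∑ i ∈ Finset.range (K + 1), ((i : ℝ) / K) * derd K m i
      ≤ ((m : ℝ) / K) * (Real.log ((K : ℝ) / m) + 1) :=
  derd_expectation_bounds_general K m hm1 hmK
end

section
/- Let M ≥ 2, K ≥ 1, T ≥ 1, r ≥ 0, and set ε₁ = e^{M−1}/K, ε₂ = r·e^{M−1}/T. If D ∈ (M/e^{M−1}, M] satisfies D ≤ (D/M + r/T)·ln(M/D) + D/M + 1/K, then D ≤ (M/e^{M−1})·exp(ε₂(M−1) + ε₁). -/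
/-- Quantitative multi-defector price bound: with `ε₁ = e^{M−1}/K`, `ε₂ = r·e^{M−1}/T`,
if `D ∈ (M/e^{M−1}, M]` satisfies `D ≤ (D/M + r/T)·ln(M/D) + D/M + 1/K`, then
`D ≤ (M/e^{M−1})·exp(ε₂(M−1) + ε₁)`. -/
theorem multi_defector_quantitative (M K T : ℕ) (hM : 2 ≤ M) (hK : 1 ≤ K) (hT : 1 ≤ T)
    (r : ℝ) (hr : 0 ≤ r) (D : ℝ)
    (hDlow : (M : ℝ) / Real.exp ((M : ℝ) - 1) < D) (hDM : D ≤ M)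
    (hfix : D ≤ (D / M + r / T) * Real.log ((M : ℝ) / D) + D / M + 1 / K) :
    D ≤ ((M : ℝ) / Real.exp ((M : ℝ) - 1)) *
        Real.exp ((r * Real.exp ((M : ℝ) - 1) / T) * ((M : ℝ) - 1)
          + Real.exp ((M : ℝ) - 1) / K) := by
  have hM2 : (2:ℝ) ≤ (M:ℝ) := by exact_mod_cast hM
  have hMpos : (0:ℝ) < M := by linarith
  have hTpos : (0:ℝ) < T := by exact_mod_cast hT
  have hKpos : (0:ℝ) < K := by exact_mod_cast hK
  set E := Real.exp ((M:ℝ) - 1) with hEdef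
  have hE : 0 < E := Real.exp_pos _
  have hD0 : 0 < D := lt_trans (by positivity) hDlow
  set L := Real.log ((M:ℝ)/D) with hLdef
  have hMD1 : 1 ≤ (M:ℝ)/D := (one_le_div hD0).mpr hDM
  have hL0 : 0 ≤ L := Real.log_nonneg hMD1
  have hMDE : (M:ℝ)/D < E := by
    rw [div_lt_iff₀ hD0]
    rw [div_lt_iff₀ hE] at hDlow
    linarith
  have hLlt : L < (M:ℝ) - 1 := by
    have h := Real.log_lt_log (by positivity) hMDE
    rwa [Real.log_exp] at h
  have key : D * ((M:ℝ) - 1 - L) ≤ (M:ℝ) * (r * L / T + 1 / K) := by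
    have h1 : D * (M:ℝ) ≤ ((D / M + r / T) * L + D / M + 1 / K) * M :=
      mul_le_mul_of_nonneg_right hfix hMpos.le
    have h2 : ((D / M + r / T) * L + D / M + 1 / K) * (M:ℝ)
        = D * L + (M:ℝ) * (r * L / T) + D + (M:ℝ) * (1 / K) := by
      field_simp
    nlinarith [h1, h2]
  -- divide by D > M/E > 0
  have step : (M:ℝ) - 1 - L ≤ E * (r * L / T + 1 / K) := by
    have h3 : ((M:ℝ)/E) * ((M:ℝ) - 1 - L) ≤ (M:ℝ) * (r * L / T + 1 / K) := by
      have : ((M:ℝ)/E) * ((M:ℝ) - 1 - L) ≤ D * ((M:ℝ) - 1 - L) :=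
        mul_le_mul_of_nonneg_right hDlow.le (by linarith)
      linarith
    rw [div_mul_eq_mul_div, div_le_iff₀ hE] at h3
    have h4 : (M:ℝ) * ((M:ℝ) - 1 - L) ≤ (M:ℝ) * (E * (r * L / T + 1 / K)) := by
      rw [show (M:ℝ) * (E * (r * L / ↑T + 1 / ↑K)) = (M:ℝ) * (r * L / ↑T + 1 / ↑K) * E
        from by ring]
      exact h3
    exact le_of_mul_le_mul_left h4 hMpos
  have hS : (M:ℝ) - 1 - (r * E / T * ((M:ℝ) - 1) + E / K) ≤ L := by
    have hrL : r * L / (T:ℝ) ≤ r * ((M:ℝ) - 1) / T := by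
      gcongr
    have h5 : E * (r * L / ↑T) ≤ E * (r * ((M:ℝ) - 1) / ↑T) :=
      mul_le_mul_of_nonneg_left hrL hE.le
    have e1 : E * (r * L / ↑T + 1 / ↑K) = E * (r * L / ↑T) + E / ↑K := by ring
    have e2 : E * (r * ((M:ℝ) - 1) / ↑T) = r * E / ↑T * ((M:ℝ) - 1) := by ring
    linarith
  -- exponentiate
  set S := r * E / T * ((M:ℝ) - 1) + E / K with hSdef
  have hexp : Real.exp ((M:ℝ) - 1 - S) ≤ (M:ℝ) / D := by
    rw [← Real.exp_log (show (0:ℝ) < (M:ℝ)/D by positivity)]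
    exact Real.exp_le_exp.mpr hS
  have hexpS : 0 < Real.exp S := Real.exp_pos _
  have hfin : D * (E / Real.exp S) ≤ (M:ℝ) := by
    have hES : Real.exp ((M:ℝ) - 1 - S) = E / Real.exp S := by
      rw [Real.exp_sub]
    rw [hES, le_div_iff₀ hD0] at hexp
    linarith [hexp]
  rw [div_mul_eq_mul_div, le_div_iff₀ hE]
  have h6 : D * (E / Real.exp S) * Real.exp S ≤ (M:ℝ) * Real.exp S :=
    mul_le_mul_of_nonneg_right hfin hexpS.le
  have h7 : D * (E / Real.exp S) * Real.exp S = D * E := by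
    field_simp
  linarith
end
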